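/- arXiv:2605.18088 — 2 statements merged into one kernel-verified Lean document; each statement's English description precedes it below -/
import Mathlib

section
/- The Minkowski spacetime antimetric: define γ : ℝⁿ × ℝⁿ → EReal (n ≥ 2) by γ(x, y) = √((y−x)₀² − ‖(y−x)⃗‖²) if y − x lies in the closed future cone Λ = {v : v₀ ≥ ‖v⃗‖}, and γ(x, y) = −∞ otherwise. Then γ is a real valued antimetric: γ(x,y) + γ(y,z) ≤ γ(x,z) for all x, y, z ∈ ℝⁿ, and γ(x,x) = 0 for all x. -/
open Finset

noncomputable def sNorm {n : ℕ} (v : Fin (n + 2) → ℝ) : ℝ :=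
  Real.sqrt (∑ i ∈ univ.filter (fun i : Fin (n + 2) => i ≠ 0), (v i) ^ 2)

def Lam {n : ℕ} : Set (Fin (n + 2) → ℝ) := {v | sNorm v ≤ v 0}

open Classical

noncomputable def gMink {n : ℕ} (x y : Fin (n + 2) → ℝ) : EReal :=
  if y - x ∈ Lam then
    ((Real.sqrt (((y - x) 0) ^ 2 - (sNorm (y - x)) ^ 2) : ℝ) : EReal)
  else ⊥

lemma sNorm_nonneg {n : ℕ} (v : Fin (n + 2) → ℝ) : 0 ≤ sNorm v := Real.sqrt_nonneg _

lemma sq_sNorm {n : ℕ} (v : Fin (n + 2) → ℝ) :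
    sNorm v ^ 2 = ∑ i ∈ univ.filter (fun i : Fin (n + 2) => i ≠ 0), (v i) ^ 2 :=
  Real.sq_sqrt (Finset.sum_nonneg fun i _ => sq_nonneg _)

lemma sq_sNorm_add {n : ℕ} (u v : Fin (n + 2) → ℝ) :
    sNorm (u + v) ^ 2 = sNorm u ^ 2
      + 2 * (∑ i ∈ univ.filter (fun i : Fin (n + 2) => i ≠ 0), u i * v i) + sNorm v ^ 2 := by
  simp only [sq_sNorm, Pi.add_apply, add_sq, Finset.sum_add_distrib, Finset.mul_sum]
  ring

lemma inner_le {n : ℕ} (u v : Fin (n + 2) → ℝ) :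
    (∑ i ∈ univ.filter (fun i : Fin (n + 2) => i ≠ 0), u i * v i) ≤ sNorm u * sNorm v := by
  set s := univ.filter (fun i : Fin (n + 2) => i ≠ 0)
  have h := Finset.sum_mul_sq_le_sq_mul_sq s u v
  have h1 : (∑ i ∈ s, u i * v i) ≤ |∑ i ∈ s, u i * v i| := le_abs_self _
  have h2 : |∑ i ∈ s, u i * v i| = Real.sqrt ((∑ i ∈ s, u i * v i) ^ 2) :=
    (Real.sqrt_sq_eq_abs _).symm
  calc (∑ i ∈ s, u i * v i) ≤ Real.sqrt ((∑ i ∈ s, u i * v i) ^ 2) := h2 ▸ h1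
    _ ≤ Real.sqrt ((∑ i ∈ s, u i ^ 2) * ∑ i ∈ s, v i ^ 2) := Real.sqrt_le_sqrt h
    _ = sNorm u * sNorm v := by
        rw [Real.sqrt_mul (Finset.sum_nonneg fun i _ => sq_nonneg _)]; rfl

lemma sNorm_add_le {n : ℕ} (u v : Fin (n + 2) → ℝ) :
    sNorm (u + v) ≤ sNorm u + sNorm v := by
  have h : sNorm (u + v) ^ 2 ≤ (sNorm u + sNorm v) ^ 2 := by
    nlinarith [sq_sNorm_add u v, inner_le u v]
  calc sNorm (u + v) = Real.sqrt (sNorm (u + v) ^ 2) :=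
        (Real.sqrt_sq (sNorm_nonneg _)).symm
    _ ≤ Real.sqrt ((sNorm u + sNorm v) ^ 2) := Real.sqrt_le_sqrt h
    _ = sNorm u + sNorm v := Real.sqrt_sq (add_nonneg (sNorm_nonneg u) (sNorm_nonneg v))

lemma sqrt_key (A B C D S : ℝ) (hB : 0 ≤ B) (hD : 0 ≤ D) (hBA : B ≤ A) (hDC : D ≤ C)
    (hS : S ≤ B * D) :
    Real.sqrt (A ^ 2 - B ^ 2) + Real.sqrt (C ^ 2 - D ^ 2) ≤
      Real.sqrt ((A + C) ^ 2 - (B ^ 2 + 2 * S + D ^ 2)) := by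
  have h1 : 0 ≤ A ^ 2 - B ^ 2 := by nlinarith
  have h2 : 0 ≤ C ^ 2 - D ^ 2 := by nlinarith
  have hBDAC : B * D ≤ A * C := mul_le_mul hBA hDC hD (le_trans hB hBA)
  have hACS : 0 ≤ A * C - S := by linarith
  have hprod : Real.sqrt (A ^ 2 - B ^ 2) * Real.sqrt (C ^ 2 - D ^ 2) ≤ A * C - S := by
    rw [← Real.sqrt_mul h1]
    have hkey : (A ^ 2 - B ^ 2) * (C ^ 2 - D ^ 2) ≤ (A * C - S) ^ 2 := by
      nlinarith [sq_nonneg (A * D - B * C),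
        mul_nonneg (sub_nonneg.2 hS) (sub_nonneg.2 hBDAC)]
    calc Real.sqrt ((A ^ 2 - B ^ 2) * (C ^ 2 - D ^ 2)) ≤ Real.sqrt ((A * C - S) ^ 2) :=
          Real.sqrt_le_sqrt hkey
      _ = A * C - S := Real.sqrt_sq hACS
  rw [show (A + C) ^ 2 - (B ^ 2 + 2 * S + D ^ 2)
      = (A ^ 2 - B ^ 2) + (C ^ 2 - D ^ 2) + 2 * (A * C - S) by ring]
  rw [Real.le_sqrt (by positivity) (by linarith)]
  have e1 := Real.sq_sqrt h1
  have e2 := Real.sq_sqrt h2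
  nlinarith [hprod]

/-- `γ` is a real valued antimetric on Minkowski spacetime:
`γ(x,y) + γ(y,z) ≤ γ(x,z)` and `γ(x,x) = 0`. -/
theorem gMink_is_antimetric {n : ℕ} :
    (∀ x y z : Fin (n + 2) → ℝ, gMink x y + gMink y z ≤ gMink x z) ∧
      (∀ x : Fin (n + 2) → ℝ, gMink x x = 0) := by
  constructor
  · intro x y z
    by_cases hu : y - x ∈ Lam
    · by_cases hv : z - y ∈ Lam
      · have hadd : (y - x) + (z - y) = z - x := by abel
        have h0 : (z - x) 0 = (y - x) 0 + (z - y) 0 := by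
          simp only [Pi.sub_apply]; ring
        have huv : z - x ∈ Lam := by
          simp only [Lam, Set.mem_setOf_eq] at hu hv ⊢
          calc sNorm (z - x) = sNorm ((y - x) + (z - y)) := by rw [hadd]
            _ ≤ sNorm (y - x) + sNorm (z - y) := sNorm_add_le _ _
            _ ≤ (y - x) 0 + (z - y) 0 := add_le_add hu hv
            _ = (z - x) 0 := h0.symm
        simp only [gMink, if_pos hu, if_pos hv, if_pos huv, ← EReal.coe_add,
          EReal.coe_le_coe_iff]
        have key := sqrt_key ((y - x) 0) (sNorm (y - x)) ((z - y) 0) (sNorm (z - y))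
          (∑ i ∈ univ.filter (fun i : Fin (n + 2) => i ≠ 0), (y - x) i * (z - y) i)
          (sNorm_nonneg _) (sNorm_nonneg _) hu hv (inner_le _ _)
        have hsq : sNorm (z - x) ^ 2 = sNorm (y - x) ^ 2
            + 2 * (∑ i ∈ univ.filter (fun i : Fin (n + 2) => i ≠ 0), (y - x) i * (z - y) i)
            + sNorm (z - y) ^ 2 := by
          rw [← hadd]; exact sq_sNorm_add _ _
        rw [h0, hsq]
        exact key
      · simp only [gMink, if_neg hv]
        rw [EReal.add_bot]
        exact bot_le
    · simp only [gMink, if_neg hu]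
      rw [EReal.bot_add]
      exact bot_le
  · intro x
    have h0 : x - x = 0 := sub_self x
    have hs : sNorm (0 : Fin (n + 2) → ℝ) = 0 := by simp [sNorm]
    have hmem : (0 : Fin (n + 2) → ℝ) ∈ Lam := by simp [Lam, hs]
    simp [gMink, h0, hmem, hs]
end

section
/- Let ρ_M : ℝⁿ × ℝⁿ → EReal (n ≥ 2) be the Minkowski real valued metric, ρ_M(x,y) = −√((y−x)₀² − ‖(y−x)⃗‖²) if y − x ∈ Λ and ρ_M(x,y) = ∞ otherwise, and let δ be the δ-metric of the interval, δ(t,t') = t' − t if t ≤ t', δ(t,t') = ∞ otherwise. Then a map a : [0,1] → ℝⁿ admits a Lipschitz constant λ ∈ [0, ∞) with ρ_M(a(t), a(t')) ≤ λ · δ(t, t') for all t, t' ∈ [0,1] if and only if a is weakly increasing from the natural order of [0,1] to the causality order of ℝⁿ, i.e. t ≤ t' implies a(t') − a(t) ∈ Λ. -/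
open Finset

open Classical

/-- The Minkowski real valued metric: `ρ_M(x,y) = −√((y−x)₀² − ‖(y−x)⃗‖²)` if
`y − x ∈ Λ`, and `∞` otherwise. -/
noncomputable def rhoMink {n : ℕ} (x y : Fin (n + 2) → ℝ) : EReal :=
  if y - x ∈ Lam then
    ((-Real.sqrt (((y - x) 0) ^ 2 - (sNorm (y - x)) ^ 2) : ℝ) : EReal)
  else ⊤

/-- The δ-metric of the interval: `δ(t,t') = t' − t` if `t ≤ t'`, `∞` otherwise,
with values in `EReal`. -/
noncomputable def deltaI (t t' : ℝ) : EReal :=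
  if t ≤ t' then ((t' - t : ℝ) : EReal) else ⊤

/-- a map `a : [0,1] → ℝ^{n+2}` admits a Lipschitz constant
`λ ∈ [0, ∞)` with `ρ_M(a t, a t') ≤ λ · δ(t, t')` for all `t, t' ∈ [0,1]`
if and only if it is weakly increasing from the natural order of `[0,1]` to
the causality order: `t ≤ t'` implies `a t' − a t ∈ Λ`. -/
theorem lipschitz_iff_weakly_increasing {n : ℕ} (a : ℝ → (Fin (n + 2) → ℝ)) :
    (∃ l : ℝ, 0 ≤ l ∧ ∀ t ∈ Set.Icc (0 : ℝ) 1, ∀ t' ∈ Set.Icc (0 : ℝ) 1,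
        rhoMink (a t) (a t') ≤ (l : EReal) * deltaI t t') ↔
      (∀ t ∈ Set.Icc (0 : ℝ) 1, ∀ t' ∈ Set.Icc (0 : ℝ) 1,
        t ≤ t' → a t' - a t ∈ Lam) := by
  constructor
  · rintro ⟨l, hl, H⟩ t ht t' ht' htt'
    by_contra hmem
    have h := H t ht t' ht'
    rw [rhoMink, if_neg hmem, deltaI, if_pos htt'] at h
    have : ((l : EReal) * ((t' - t : ℝ) : EReal)) = ((l * (t' - t) : ℝ) : EReal) := by
      exact_mod_cast (EReal.coe_mul l (t' - t)).symm
    rw [this] at h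
    exact (EReal.coe_lt_top _).not_ge (le_of_eq (top_le_iff.mp h).symm)
  · intro H
    refine ⟨1, zero_le_one, fun t ht t' ht' => ?_⟩
    by_cases htt' : t ≤ t'
    · rw [rhoMink, if_pos (H t ht t' ht' htt'), deltaI, if_pos htt']
      have h1 : -Real.sqrt (((a t' - a t) 0) ^ 2 - (sNorm (a t' - a t)) ^ 2) ≤ 0 :=
        neg_nonpos.mpr (Real.sqrt_nonneg _)
      have h2 : (0 : ℝ) ≤ t' - t := sub_nonneg.mpr htt'
      have h3 : -Real.sqrt (((a t' - a t) 0) ^ 2 - (sNorm (a t' - a t)) ^ 2) ≤ 1 * (t' - t) := by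
        rw [one_mul]; exact h1.trans h2
      exact_mod_cast h3
    · rw [deltaI, if_neg htt']
      rw [show ((1 : ℝ) : EReal) * ⊤ = ⊤ by
        simp [EReal.mul_top_of_pos]]
      exact le_top
end
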